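/- arXiv:2510.07554 — 3 statements merged into one kernel-verified Lean document; each statement's English description precedes it below -/
import Mathlib

section
/- Let τ_n, q_n > 0 with τ_n → 0 and α_n := τ_n/q_n → α > 0. Let X ~ Exp(1/α) and set X'_n = -X·τ_n/(α·log(1-q_n)) and Y_n = τ_n·⌈X'_n/τ_n⌉. Then Y_n/τ_n follows a Geom(q_n) distribution and E|Y_n - X| → 0 as n → ∞. -/
/-!
With `bₙ = -1 / (α log (1 - qₙ))` the variable is `Yₙ / τₙ = ⌈X bₙ⌉`, and
`P(⌈X bₙ⌉ ≥ k) = P(X > (k - 1) / bₙ) = exp (-1 / (α bₙ)) ^ (k - 1) = (1 - qₙ) ^ (k - 1)`.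
For the `L¹` estimate, `τₙ ⌈X bₙ⌉` lies within `τₙ` of `τₙ bₙ X`, so
`|Yₙ - X| ≤ |τₙ bₙ - 1| X + τₙ`; the mean of `X` is finite, and `τₙ bₙ → 1` because
`τₙ / qₙ → α` and `-log (1 - q) / q → 1` as `q → 0`.
-/

open MeasureTheory Filter Topology

theorem Real.tendsto_neg_log_one_sub_div_self :
    Tendsto (fun x : ℝ => -Real.log (1 - x) / x) (𝓝[≠] 0) (𝓝 1) := by
  have hderiv : HasDerivAt (fun x : ℝ => -Real.log (1 - x)) 1 0 := by
    simpa using (((hasDerivAt_id (0 : ℝ)).const_sub 1).log (by norm_num)).fun_neg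
  simpa [div_eq_inv_mul] using hasDerivAt_iff_tendsto_slope_zero.mp hderiv

theorem Real.log_one_sub_neg {x : ℝ} (hx : x ∈ Set.Ioo 0 1) : Real.log (1 - x) < 0 :=
  Real.log_neg (by linarith [hx.2]) (by linarith [hx.1])

theorem abs_mul_ceil_mul_sub_le {τ b x : ℝ} (hτ : 0 ≤ τ) (hx : 0 ≤ x) :
    |τ * ⌈x * b⌉ - x| ≤ |τ * b - 1| * x + τ := by
  have hceil : τ * ⌈x * b⌉ - τ * (x * b) ∈ Set.Icc 0 τ := by
    constructor
    · nlinarith [Int.le_ceil (x * b)]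
    · nlinarith [Int.ceil_lt_add_one (x * b)]
  calc |τ * ⌈x * b⌉ - x| = |(τ * b - 1) * x + (τ * ⌈x * b⌉ - τ * (x * b))| := by ring_nf
    _ ≤ |τ * b - 1| * x + τ := by
      grw [abs_add_le, abs_mul, abs_of_nonneg hx, abs_of_nonneg hceil.1, hceil.2]

section ExponentialTail

variable {Ω : Type*} [MeasurableSpace Ω] {μ : Measure Ω} {X : Ω → ℝ} {α : ℝ}

theorem ae_pos_of_exp_tail [IsProbabilityMeasure μ] (hXm : Measurable X)
    (hX : ∀ t : ℝ, 0 ≤ t → μ {ω | t < X ω} = ENNReal.ofReal (Real.exp (-t / α))) :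
    ∀ᵐ ω ∂μ, 0 < X ω := by
  have hpos : μ {ω | 0 < X ω} = 1 := by simpa using hX 0 le_rfl
  exact (prob_compl_eq_zero_iff (measurableSet_lt measurable_const hXm)).mpr hpos

theorem integrable_of_exp_tail [IsProbabilityMeasure μ] (hα : 0 < α) (hXm : Measurable X)
    (hX : ∀ t : ℝ, 0 ≤ t → μ {ω | t < X ω} = ENNReal.ofReal (Real.exp (-t / α))) :
    Integrable X μ := by
  have hnn : 0 ≤ᵐ[μ] X := (ae_pos_of_exp_tail hXm hX).mono fun _ h => h.le
  refine ⟨hXm.aestronglyMeasurable, ?_⟩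
  rw [hasFiniteIntegral_iff_ofReal hnn, lintegral_eq_lintegral_meas_lt μ hnn hXm.aemeasurable]
  calc ∫⁻ t in Set.Ioi 0, μ {ω | t < X ω}
      = ∫⁻ t in Set.Ioi 0, ENNReal.ofReal (Real.exp (-(1 / α) * t)) := by
        refine setLIntegral_congr_fun measurableSet_Ioi fun t ht => ?_
        rw [hX t (le_of_lt ht)]
        ring_nf
    _ < ⊤ := (exp_neg_integrableOn_Ioi 0 (by positivity)).lintegral_lt_top

theorem measure_natCast_le_ceil_mul {c : ℝ} (hc : 0 < c)
    (hX : ∀ t : ℝ, 0 ≤ t → μ {ω | t < X ω} = ENNReal.ofReal (Real.exp (-t / α)))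
    (k : ℕ) (hk : 1 ≤ k) :
    μ {ω | (k : ℤ) ≤ ⌈X ω * c⌉} = ENNReal.ofReal (Real.exp (-1 / (α * c)) ^ (k - 1)) := by
  have hset : {ω | (k : ℤ) ≤ ⌈X ω * c⌉} = {ω | ((k - 1 : ℕ) : ℝ) / c < X ω} := by
    ext ω
    simp [Int.le_ceil_iff, div_lt_iff₀ hc, Nat.cast_sub hk]
  rw [hset, hX _ (by positivity), ← Real.exp_nat_mul]
  congr 2
  field_simp

end ExponentialTail

theorem tendsto_integral_abs_mul_ceil_mul_sub {Ω ι : Type*} [MeasurableSpace Ω] {μ : Measure Ω}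
    [IsFiniteMeasure μ] {X : Ω → ℝ} {l : Filter ι} {τ b : ι → ℝ}
    (hXm : Measurable X) (hint : Integrable X μ) (hnn : 0 ≤ᵐ[μ] X) (hτ : ∀ n, 0 ≤ τ n)
    (hτ0 : Tendsto τ l (𝓝 0)) (hτb : Tendsto (fun n => τ n * b n) l (𝓝 1)) :
    Tendsto (fun n => ∫ ω, |τ n * ⌈X ω * b n⌉ - X ω| ∂μ) l (𝓝 0) := by
  set bound : ι → Ω → ℝ := fun n ω => |τ n * b n - 1| * X ω + τ n
  have hbound_int : ∀ n, Integrable (bound n) μ :=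
    fun n => (hint.const_mul _).add (integrable_const _)
  have hle : ∀ n, (fun ω => |τ n * ⌈X ω * b n⌉ - X ω|) ≤ᵐ[μ] bound n := fun n =>
    hnn.mono fun ω hω => abs_mul_ceil_mul_sub_le (hτ n) hω
  have hmeas : ∀ n, AEStronglyMeasurable (fun ω => |τ n * ⌈X ω * b n⌉ - X ω|) μ := fun n =>
    (((measurable_from_top.comp (hXm.mul_const (b n)).ceil).const_mul (τ n)).sub
      hXm).abs.aestronglyMeasurable
  have hlim : Tendsto (fun n => ∫ ω, bound n ω ∂μ) l (𝓝 0) := by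
    simp only [bound, integral_add (hint.const_mul _) (integrable_const _), integral_const_mul,
      integral_const, smul_eq_mul]
    simpa using (((hτb.sub_const 1).abs.mul_const _).add (hτ0.const_mul _))
  refine squeeze_zero (fun n => integral_nonneg fun ω => abs_nonneg _) (fun n => ?_) hlim
  have hint_n : Integrable (fun ω => |τ n * ⌈X ω * b n⌉ - X ω|) μ :=
    (hbound_int n).mono' (hmeas n) ((hle n).mono fun ω h => by rwa [Real.norm_eq_abs, abs_abs])
  exact integral_mono_ae hint_n (hbound_int n) (hle n)

theorem tendsto_mul_neg_inv_log_one_sub {ι : Type*} {l : Filter ι} {τ q : ι → ℝ} {α : ℝ}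
    (hα : 0 < α) (hτpos : ∀ n, 0 < τ n) (hq : ∀ n, q n ∈ Set.Ioo (0 : ℝ) 1)
    (hτ0 : Tendsto τ l (𝓝 0)) (hαn : Tendsto (fun n => τ n / q n) l (𝓝 α)) :
    Tendsto (fun n => τ n * (-1 / (α * Real.log (1 - q n)))) l (𝓝 1) := by
  have hq0 : Tendsto q l (𝓝[≠] 0) := by
    refine tendsto_nhdsWithin_of_tendsto_nhds_of_eventually_within _ ?_
      (Eventually.of_forall fun n => (hq n).1.ne')
    refine Tendsto.congr (fun n => ?_) (by simpa using hτ0.div hαn hα.ne')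
    simp only [Pi.div_apply]
    field_simp [(hτpos n).ne', (hq n).1.ne']
  have hslope := (Real.tendsto_neg_log_one_sub_div_self.comp hq0).inv₀ one_ne_zero
  convert (hαn.mul hslope).div_const α using 2 with n
  · simp only [Function.comp_apply]
    field_simp [(hq n).1.ne', (Real.log_one_sub_neg (hq n)).ne]
  · field_simp

/-- Jump-time coupling: if `X ~ Exp(1/α)`, `X'ₙ = -X·τₙ/(α log(1-qₙ))` and
`Yₙ = τₙ⌈X'ₙ/τₙ⌉`, then `Yₙ/τₙ ~ Geom(qₙ)` and `E|Yₙ - X| → 0`. -/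
theorem jump_time_coupling {Ω : Type*} [MeasurableSpace Ω]
    (μ : Measure Ω) [IsProbabilityMeasure μ]
    (α : ℝ) (hα : 0 < α) (τ q : ℕ → ℝ)
    (hτpos : ∀ n, 0 < τ n) (hq : ∀ n, q n ∈ Set.Ioo (0 : ℝ) 1)
    (hτ0 : Tendsto τ atTop (nhds 0))
    (hαn : Tendsto (fun n => τ n / q n) atTop (nhds α))
    (X : Ω → ℝ) (hXm : Measurable X)
    (hX : ∀ t : ℝ, 0 ≤ t → μ {ω | t < X ω} = ENNReal.ofReal (Real.exp (-t / α))) :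
    (∀ n, ∀ k : ℕ, 1 ≤ k →
      μ {ω | (k : ℤ) ≤ ⌈(-X ω * τ n / (α * Real.log (1 - q n))) / τ n⌉} =
        ENNReal.ofReal ((1 - q n) ^ (k - 1))) ∧
    Tendsto
      (fun n => ∫ ω,
        |τ n * ((⌈(-X ω * τ n / (α * Real.log (1 - q n))) / τ n⌉ : ℤ) : ℝ) - X ω| ∂μ)
      atTop (nhds 0) := by
  set b : ℕ → ℝ := fun n => -1 / (α * Real.log (1 - q n))
  have hαlog : ∀ n, α * Real.log (1 - q n) < 0 :=
    fun n => mul_neg_of_pos_of_neg hα (Real.log_one_sub_neg (hq n))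
  have hb_pos : ∀ n, 0 < b n := fun n => div_pos_of_neg_of_neg (by norm_num) (hαlog n)
  have harg : ∀ n x, -x * τ n / (α * Real.log (1 - q n)) / τ n = x * b n := fun n x => by
    simp only [b]
    field_simp [(hτpos n).ne', (hαlog n).ne]
  simp only [harg]
  refine ⟨fun n k hk => ?_, ?_⟩
  · have hrate : Real.exp (-1 / (α * b n)) = 1 - q n := by
      simp only [b]
      field_simp [(hαlog n).ne]
      exact Real.exp_log (by linarith [(hq n).2])
    rw [measure_natCast_le_ceil_mul (hb_pos n) hX k hk, hrate]
  · exact tendsto_integral_abs_mul_ceil_mul_sub hXm (integrable_of_exp_tail hα hXm hX)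
      ((ae_pos_of_exp_tail hXm hX).mono fun _ h => h.le) (fun n => (hτpos n).le) hτ0
      (tendsto_mul_neg_inv_log_one_sub hα hτpos hq hτ0 hαn)
end

section
/- Suppose φ: ℝ^p → ℝ^m is bounded and differentiable with a bounded and Lipschitz differential Dφ, and y ∈ ℝ^m. Define f(μ) = ∫ φ dμ for μ a probability measure on ℝ^p with finite first moment, and ∇V[μ](x) = Dφ(x)ᵀ(f(μ) - y). Then there exists C > 0 such that for all probability measures μ, μ' with finite first moment and all x, x' ∈ ℝ^p: ‖∇V[μ](x) - ∇V[μ'](x')‖₂ ≤ C(‖x - x'‖₂ + W₁(μ, μ')), where W₁ is the 1-Wasserstein distance. -/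
open MeasureTheory

/-- The 1-Wasserstein distance, in dual (Kantorovich–Rubinstein) form:
`W₁(μ,ν) = sup over 1-Lipschitz ψ of ∫ψ dμ - ∫ψ dν`. -/
noncomputable def W1 {p : ℕ} (μ ν : Measure (EuclideanSpace ℝ (Fin p))) : ℝ :=
  sSup {r : ℝ | ∃ ψ : EuclideanSpace ℝ (Fin p) → ℝ, LipschitzWith 1 ψ ∧
    r = (∫ x, ψ x ∂μ) - ∫ x, ψ x ∂ν}

/-! The gradient `Dφ(x)ᵀ(∫φ dμ - y)` splits as `(Dφ(x) - Dφ(x'))ᵀ(∫φ dμ - y)`, controlled by the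
Lipschitz differential and the bound on `φ`, plus `Dφ(x')ᵀ(∫φ dμ - ∫φ dμ')`. Since `φ` is
`sup ‖Dφ‖`-Lipschitz by the mean value inequality, testing `∫φ dμ - ∫φ dμ'` against its own
direction `v` gives `‖v‖² = ∫⟪v, φ⟫ dμ - ∫⟪v, φ⟫ dμ' ≤ ‖v‖ sup ‖Dφ‖ W₁(μ, μ')`. -/

theorem ContinuousLinearMap.norm_adjoint_apply_sub_adjoint_apply_le
    {𝕜 E F : Type*} [RCLike 𝕜] [NormedAddCommGroup E] [InnerProductSpace 𝕜 E] [CompleteSpace E]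
    [NormedAddCommGroup F] [InnerProductSpace 𝕜 F] [CompleteSpace F]
    (A B : E →L[𝕜] F) (u v : F) :
    ‖adjoint A u - adjoint B v‖ ≤ ‖A - B‖ * ‖u‖ + ‖B‖ * ‖u - v‖ := by
  have hsplit : adjoint A u - adjoint B v = adjoint (A - B) u + adjoint B (u - v) := by
    simp only [map_sub, sub_apply]
    abel
  rw [hsplit]
  refine (norm_add_le _ _).trans (add_le_add ?_ ?_)
  · simpa only [LinearIsometryEquiv.norm_map] using (adjoint (A - B)).le_opNorm u
  · simpa only [LinearIsometryEquiv.norm_map] using (adjoint B).le_opNorm (u - v)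

theorem lipschitzWith_of_hasFDerivAt_of_norm_le
    {E F : Type*} [NormedAddCommGroup E] [NormedSpace ℝ E] [NormedAddCommGroup F]
    [NormedSpace ℝ F] {f : E → F} {f' : E → E →L[ℝ] F} {C : ℝ}
    (hf : ∀ x, HasFDerivAt f (f' x) x) (bound : ∀ x, ‖f' x‖ ≤ C) :
    LipschitzWith C.toNNReal f := by
  rw [← lipschitzOnWith_univ]
  refine convex_univ.lipschitzOnWith_of_nnnorm_hasFDerivWithin_le
    (fun x _ => (hf x).hasFDerivWithinAt) fun x _ => ?_
  rw [← NNReal.coe_le_coe, coe_nnnorm]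
  exact (bound x).trans (Real.le_coe_toNNReal C)

section LipschitzIntegral

variable {E F : Type*} [NormedAddCommGroup E] [MeasurableSpace E] [OpensMeasurableSpace E]
  [SecondCountableTopology E] [NormedAddCommGroup F]
  {μ : Measure E} {K : NNReal} {f : E → F}

theorem LipschitzWith.integrable_of_integrable_norm [IsFiniteMeasure μ]
    (hf : LipschitzWith K f) (hμ : Integrable (fun x => ‖x‖) μ) : Integrable f μ := by
  refine ((integrable_const ‖f 0‖).add (hμ.const_mul K)).mono' hf.continuous.aestronglyMeasurable
    (Filter.Eventually.of_forall fun x => ?_)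
  calc ‖f x‖ ≤ ‖f 0‖ + ‖f x - f 0‖ := norm_le_insert' _ _
    _ ≤ ‖f 0‖ + K * ‖x‖ := by simpa using hf.norm_sub_le x 0

theorem LipschitzWith.norm_integral_sub_le [NormedSpace ℝ F] [CompleteSpace F]
    [IsProbabilityMeasure μ]
    (hf : LipschitzWith K f) (hμ : Integrable (fun x => ‖x‖) μ) :
    ‖(∫ x, f x ∂μ) - f 0‖ ≤ K * ∫ x, ‖x‖ ∂μ := by
  have hint := hf.integrable_of_integrable_norm hμ
  rw [← integral_const_mul]
  calc ‖(∫ x, f x ∂μ) - f 0‖ = ‖∫ x, (f x - f 0) ∂μ‖ := by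
        rw [integral_sub hint (integrable_const _), integral_const, probReal_univ, one_smul]
    _ ≤ ∫ x, ‖f x - f 0‖ ∂μ := norm_integral_le_integral_norm _
    _ ≤ ∫ x, K * ‖x‖ ∂μ :=
        integral_mono (hint.sub (integrable_const _)).norm (hμ.const_mul K)
          fun x => by simpa using hf.norm_sub_le x 0

end LipschitzIntegral

section Wasserstein

variable {p : ℕ} {μ ν : Measure (EuclideanSpace ℝ (Fin p))} [IsProbabilityMeasure μ]
  [IsProbabilityMeasure ν]

theorem W1_bddAbove (hμ : Integrable (fun x => ‖x‖) μ) (hν : Integrable (fun x => ‖x‖) ν) :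
    BddAbove {r : ℝ | ∃ ψ : EuclideanSpace ℝ (Fin p) → ℝ, LipschitzWith 1 ψ ∧
      r = (∫ x, ψ x ∂μ) - ∫ x, ψ x ∂ν} := by
  refine ⟨(∫ x, ‖x‖ ∂μ) + ∫ x, ‖x‖ ∂ν, ?_⟩
  rintro r ⟨ψ, hψ, rfl⟩
  have hμψ := abs_le.mp (hψ.norm_integral_sub_le hμ)
  have hνψ := abs_le.mp (hψ.norm_integral_sub_le hν)
  simp only [NNReal.coe_one, one_mul] at hμψ hνψ
  linarith [hμψ.2, hνψ.1]

theorem integral_sub_integral_le_W1 (hμ : Integrable (fun x => ‖x‖) μ)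
    (hν : Integrable (fun x => ‖x‖) ν) {ψ : EuclideanSpace ℝ (Fin p) → ℝ}
    (hψ : LipschitzWith 1 ψ) : (∫ x, ψ x ∂μ) - ∫ x, ψ x ∂ν ≤ W1 μ ν :=
  le_csSup (W1_bddAbove hμ hν) ⟨ψ, hψ, rfl⟩

theorem W1_nonneg (hμ : Integrable (fun x => ‖x‖) μ) (hν : Integrable (fun x => ‖x‖) ν) :
    0 ≤ W1 μ ν := by
  simpa using integral_sub_integral_le_W1 hμ hν (LipschitzWith.const' (0 : ℝ))

theorem integral_sub_integral_le_mul_W1 (hμ : Integrable (fun x => ‖x‖) μ)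
    (hν : Integrable (fun x => ‖x‖) ν) {K : NNReal} {ψ : EuclideanSpace ℝ (Fin p) → ℝ}
    (hψ : LipschitzWith K ψ) : (∫ x, ψ x ∂μ) - ∫ x, ψ x ∂ν ≤ K * W1 μ ν := by
  rcases eq_or_ne K 0 with rfl | hK
  · have hconst : ∀ x, ψ x = ψ 0 := fun x => by simpa [sub_eq_zero] using hψ.norm_sub_le x 0
    simp [hconst]
  · have hψ' : LipschitzWith 1 fun x => (K : ℝ)⁻¹ * ψ x := by
      have hscaled := (lipschitzWith_smul (K : ℝ)⁻¹).comp hψ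
      rwa [show ‖(K : ℝ)⁻¹‖₊ * K = 1 by ext; simp [hK]] at hscaled
    have := integral_sub_integral_le_W1 hμ hν hψ'
    rw [integral_const_mul, integral_const_mul, ← mul_sub] at this
    have hKpos : (0 : ℝ) < K := by positivity
    rwa [inv_mul_le_iff₀ hKpos] at this

theorem norm_integral_sub_integral_le_mul_W1 {F : Type*} [NormedAddCommGroup F]
    [InnerProductSpace ℝ F] [CompleteSpace F] (hμ : Integrable (fun x => ‖x‖) μ)
    (hν : Integrable (fun x => ‖x‖) ν) {K : NNReal} {f : EuclideanSpace ℝ (Fin p) → F}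
    (hf : LipschitzWith K f) : ‖(∫ x, f x ∂μ) - ∫ x, f x ∂ν‖ ≤ K * W1 μ ν := by
  set v := (∫ x, f x ∂μ) - ∫ x, f x ∂ν
  have hW := W1_nonneg hμ hν
  have hv : ‖v‖ * ‖v‖ ≤ ‖v‖ * (K * W1 μ ν) := by
    have := integral_sub_integral_le_mul_W1 hμ hν ((innerSL ℝ v).lipschitz.comp hf)
    simp only [Function.comp_apply, innerSL_apply_apply, NNReal.coe_mul, coe_nnnorm,
      innerSL_apply_norm, integral_inner (hf.integrable_of_integrable_norm hμ),
      integral_inner (hf.integrable_of_integrable_norm hν), ← inner_sub_right] at this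
    change inner ℝ v v ≤ _ at this
    rw [real_inner_self_eq_norm_mul_norm] at this
    linarith
  rcases (norm_nonneg v).eq_or_lt with h0 | hpos
  · rw [← h0]
    exact mul_nonneg K.coe_nonneg hW
  · exact le_of_mul_le_mul_left hv hpos

end Wasserstein

/-- If `φ` is bounded and differentiable with bounded Lipschitz differential, and
`∇V[μ](x) = Dφ(x)ᵀ(∫φ dμ - y)`, then `∇V` is jointly Lipschitz in `(μ, x)`:
`‖∇V[μ](x) - ∇V[μ'](x')‖ ≤ C(‖x - x'‖ + W₁(μ, μ'))`. -/
theorem gradV_lipschitz {p m : ℕ}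
    (φ : EuclideanSpace ℝ (Fin p) → EuclideanSpace ℝ (Fin m))
    (Dφ : EuclideanSpace ℝ (Fin p) →
      (EuclideanSpace ℝ (Fin p) →L[ℝ] EuclideanSpace ℝ (Fin m)))
    (Mφ MD : ℝ) (L : NNReal)
    (hφb : ∀ x, ‖φ x‖ ≤ Mφ)
    (hderiv : ∀ x, HasFDerivAt φ (Dφ x) x)
    (hDb : ∀ x, ‖Dφ x‖ ≤ MD)
    (hDlip : LipschitzWith L Dφ)
    (y : EuclideanSpace ℝ (Fin m)) :
    ∃ C > 0, ∀ (μ μ' : Measure (EuclideanSpace ℝ (Fin p))),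
      IsProbabilityMeasure μ → IsProbabilityMeasure μ' →
      Integrable (fun x => ‖x‖) μ → Integrable (fun x => ‖x‖) μ' →
      ∀ x x' : EuclideanSpace ℝ (Fin p),
        ‖ContinuousLinearMap.adjoint (Dφ x) ((∫ z, φ z ∂μ) - y) -
            ContinuousLinearMap.adjoint (Dφ x') ((∫ z, φ z ∂μ') - y)‖
          ≤ C * (‖x - x'‖ + W1 μ μ') := by
  have hMφ : 0 ≤ Mφ := (norm_nonneg _).trans (hφb 0)
  have hMD : 0 ≤ MD := (norm_nonneg _).trans (hDb 0)
  have hφlip := lipschitzWith_of_hasFDerivAt_of_norm_le hderiv hDb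
  refine ⟨L * (Mφ + ‖y‖) + MD * MD + 1, by positivity, ?_⟩
  intro μ μ' _ _ hμ hμ' x x'
  have hDx : ‖Dφ x - Dφ x'‖ ≤ L * ‖x - x'‖ := hDlip.norm_sub_le x x'
  have hfμ : ‖(∫ z, φ z ∂μ) - y‖ ≤ Mφ + ‖y‖ := by
    refine (norm_sub_le _ _).trans (add_le_add_left ?_ _)
    simpa using norm_integral_le_of_norm_le_const (μ := μ) (Filter.Eventually.of_forall hφb)
  have hfμμ' := norm_integral_sub_integral_le_mul_W1 hμ hμ' hφlip
  rw [Real.coe_toNNReal _ hMD] at hfμμ'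
  have hW := W1_nonneg hμ hμ'
  calc _ ≤ ‖Dφ x - Dφ x'‖ * ‖(∫ z, φ z ∂μ) - y‖
          + ‖Dφ x'‖ * ‖(∫ z, φ z ∂μ) - ∫ z, φ z ∂μ'‖ := by
        simpa only [sub_sub_sub_cancel_right] using
          ContinuousLinearMap.norm_adjoint_apply_sub_adjoint_apply_le (Dφ x) (Dφ x')
            ((∫ z, φ z ∂μ) - y) ((∫ z, φ z ∂μ') - y)
    _ ≤ L * ‖x - x'‖ * (Mφ + ‖y‖) + MD * (MD * W1 μ μ') := by
        gcongr
        exact hDb x'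
    _ ≤ (L * (Mφ + ‖y‖) + MD * MD + 1) * (‖x - x'‖ + W1 μ μ') := by
        have : 0 ≤ (L : ℝ) * (Mφ + ‖y‖) := by positivity
        nlinarith [norm_nonneg (x - x'), mul_nonneg hMD hMD]
end

section
/- (Asynchronous jump time comparison) Fix T > 0. Let ΔT_ℓ ~ Exp(1/α) i.i.d. with corresponding ΔK_ℓ = ⌈-ΔT_ℓ/(α log(1-q_n))⌉ (the Lemma 5.9 coupling), where τ_n, q_n > 0 satisfy τ_n → 0 and α_n := τ_n/q_n → α > 0. Then for n large enough: ΔT_ℓ · α_n/((1+q_n)α) ≤ τ_n ΔK_ℓ < ΔT_ℓ · α_n/α + τ_n; hence summing, for partial sums T_j = Σ_{ℓ≤j} ΔT_ℓ and K_j = Σ_{ℓ≤j} ΔK_ℓ: T_j · α_n/((1+q_n)α) ≤ τ_n K_j < T_j · α_n/α + j τ_n. -/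
open Filter

/-- Taylor bound: for `0 < q ≤ 1/3`, `-log (1-q) ≤ q + q^2`. -/
lemma neg_log_one_sub_le (q : ℝ) (hq0 : 0 < q) (hq3 : q ≤ 1/3) :
    -Real.log (1 - q) ≤ q + q ^ 2 := by
  have hq1 : q < 1 := lt_of_le_of_lt hq3 (by norm_num)
  have habs : |q| < 1 := by rw [abs_of_pos hq0]; exact hq1
  have h := Real.abs_log_sub_add_sum_range_le habs 2
  have hsum : (∑ i ∈ Finset.range 2, q ^ (i + 1) / (i + 1)) = q + q ^ 2 / 2 := by
    norm_num [Finset.sum_range_succ]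
  rw [hsum, abs_of_pos hq0] at h
  have h1 : -Real.log (1 - q) ≤ q + q ^ 2 / 2 + q ^ 3 / (1 - q) := by
    have := abs_le.1 h
    linarith [this.1]
  have h2 : q ^ 3 / (1 - q) ≤ q ^ 2 / 2 := by
    rw [div_le_div_iff₀ (by linarith) (by norm_num)]
    nlinarith
  linarith

/-- Asynchronous jump time comparison: with `ΔK_ℓ = ⌈-ΔT_ℓ/(α log(1-qₙ))⌉` and
`αₙ = τₙ/qₙ → α`, for `n` large enough,
`ΔT_ℓ·αₙ/((1+qₙ)α) ≤ τₙΔK_ℓ < ΔT_ℓ·αₙ/α + τₙ`, and for the partial sums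
`T_j, K_j` (with `j ≥ 1`): `T_j·αₙ/((1+qₙ)α) ≤ τₙK_j < T_j·αₙ/α + jτₙ`. -/
theorem asynchronous_jump_time_comparison (α : ℝ) (hα : 0 < α)
    (τ q : ℕ → ℝ) (hτ : ∀ n, 0 < τ n) (hq : ∀ n, q n ∈ Set.Ioo (0 : ℝ) 1)
    (hτ0 : Tendsto τ atTop (nhds 0))
    (hαn : Tendsto (fun n => τ n / q n) atTop (nhds α))
    (ΔT : ℕ → ℝ) (hΔT : ∀ ℓ, 0 < ΔT ℓ) :
    ∀ᶠ n in atTop,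
      (∀ ℓ : ℕ,
        ΔT ℓ * ((τ n / q n) / ((1 + q n) * α))
            ≤ τ n * ((⌈-ΔT ℓ / (α * Real.log (1 - q n))⌉ : ℤ) : ℝ) ∧
        τ n * ((⌈-ΔT ℓ / (α * Real.log (1 - q n))⌉ : ℤ) : ℝ)
            < ΔT ℓ * ((τ n / q n) / α) + τ n) ∧
      (∀ j : ℕ, 1 ≤ j →
        (∑ ℓ ∈ Finset.range j, ΔT ℓ) * ((τ n / q n) / ((1 + q n) * α))
            ≤ τ n * ∑ ℓ ∈ Finset.range j,
                ((⌈-ΔT ℓ / (α * Real.log (1 - q n))⌉ : ℤ) : ℝ) ∧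
        τ n * ∑ ℓ ∈ Finset.range j,
              ((⌈-ΔT ℓ / (α * Real.log (1 - q n))⌉ : ℤ) : ℝ)
            < (∑ ℓ ∈ Finset.range j, ΔT ℓ) * ((τ n / q n) / α) + j * τ n) := by
  -- q n → 0
  have hq0 : Tendsto q atTop (nhds 0) := by
    have h1 : Tendsto (fun n => τ n / (τ n / q n)) atTop (nhds (0 / α)) :=
      hτ0.div hαn hα.ne'
    rw [zero_div] at h1
    refine h1.congr (fun n => ?_)
    field_simp
    rw [mul_comm]
    rw [mul_div_assoc, div_self (hτ n).ne', mul_one]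
  have hsmall : ∀ᶠ n in atTop, q n ≤ 1/3 := by
    have := hq0.eventually (eventually_le_nhds (by norm_num : (0:ℝ) < 1/3))
    exact this
  filter_upwards [hsmall] with n hn
  set Q := q n with hQdef
  have hQ0 : 0 < Q := (hq n).1
  have hQ1 : Q < 1 := (hq n).2
  have hτn : 0 < τ n := hτ n
  set L := -Real.log (1 - Q) with hL
  have hLpos : 0 < L := by
    have : Real.log (1 - Q) < 0 :=
      Real.log_neg (by linarith) (by linarith)
    simp [hL]; linarith
  have hLle : L ≤ Q + Q ^ 2 := neg_log_one_sub_le Q hQ0 hn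
  have hLge : Q ≤ L := by
    have h1 : (1 : ℝ) - Q ≤ Real.exp (-Q) := by
      have := Real.add_one_le_exp (-Q); linarith
    have h2 : Real.log (1 - Q) ≤ -Q := by
      calc Real.log (1 - Q) ≤ Real.log (Real.exp (-Q)) :=
            Real.log_le_log (by linarith) h1
        _ = -Q := Real.log_exp _
    simp [hL]; linarith
  -- per-ℓ bounds
  have key : ∀ ℓ : ℕ,
      ΔT ℓ * ((τ n / Q) / ((1 + Q) * α))
          ≤ τ n * ((⌈-ΔT ℓ / (α * Real.log (1 - Q))⌉ : ℤ) : ℝ) ∧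
      τ n * ((⌈-ΔT ℓ / (α * Real.log (1 - Q))⌉ : ℤ) : ℝ)
          < ΔT ℓ * ((τ n / Q) / α) + τ n := by
    intro ℓ
    have hT := hΔT ℓ
    set x : ℝ := -ΔT ℓ / (α * Real.log (1 - Q)) with hx
    have hxval : x = ΔT ℓ / (α * L) := by
      rw [hx, hL]
      rw [div_eq_div_iff (by nlinarith [hLpos] : α * Real.log (1 - Q) ≠ 0)
        (by positivity)]
      ring
    have hceil_ge : x ≤ ((⌈x⌉ : ℤ) : ℝ) := Int.le_ceil x
    have hceil_lt : ((⌈x⌉ : ℤ) : ℝ) < x + 1 := Int.ceil_lt_add_one x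
    constructor
    · calc ΔT ℓ * ((τ n / Q) / ((1 + Q) * α))
          ≤ τ n * x := by
            rw [hxval]
            rw [div_div, ← mul_div_assoc, ← mul_div_assoc]
            rw [div_le_div_iff₀ (by positivity) (by positivity)]
            nlinarith [mul_le_mul_of_nonneg_left hLle
              (by positivity : (0:ℝ) ≤ τ n * ΔT ℓ * α)]
        _ ≤ τ n * ((⌈x⌉ : ℤ) : ℝ) := by
            exact mul_le_mul_of_nonneg_left hceil_ge hτn.le
    · calc τ n * ((⌈x⌉ : ℤ) : ℝ) < τ n * (x + 1) :=
            mul_lt_mul_of_pos_left hceil_lt hτn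
        _ ≤ ΔT ℓ * ((τ n / Q) / α) + τ n := by
            rw [mul_add, mul_one, add_le_add_iff_right, hxval]
            rw [div_div, ← mul_div_assoc, ← mul_div_assoc]
            rw [div_le_div_iff₀ (by positivity) (by positivity)]
            nlinarith [mul_le_mul_of_nonneg_left hLge
              (by positivity : (0:ℝ) ≤ τ n * ΔT ℓ * α)]
  refine ⟨key, ?_⟩
  intro j hj
  have hne : (Finset.range j).Nonempty := Finset.nonempty_range_iff.2 (by omega)
  constructor
  · rw [Finset.sum_mul, Finset.mul_sum]
    exact Finset.sum_le_sum fun ℓ _ => (key ℓ).1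
  · rw [Finset.mul_sum]
    have : ∑ ℓ ∈ Finset.range j, τ n * ((⌈-ΔT ℓ / (α * Real.log (1 - Q))⌉ : ℤ) : ℝ)
        < ∑ ℓ ∈ Finset.range j, (ΔT ℓ * ((τ n / Q) / α) + τ n) :=
      Finset.sum_lt_sum_of_nonempty hne fun ℓ _ => (key ℓ).2
    calc ∑ ℓ ∈ Finset.range j, τ n * ((⌈-ΔT ℓ / (α * Real.log (1 - Q))⌉ : ℤ) : ℝ)
        < ∑ ℓ ∈ Finset.range j, (ΔT ℓ * ((τ n / Q) / α) + τ n) := this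
      _ = (∑ ℓ ∈ Finset.range j, ΔT ℓ) * ((τ n / Q) / α) + j * τ n := by
          rw [Finset.sum_add_distrib, Finset.sum_const, Finset.card_range,
            Finset.sum_mul, nsmul_eq_mul]
end
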